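/- Let d ≥ 1 be an integer, ε > 0, β ∈ (0,1), λ ∈ ℝ, and let K = [−2d², 6d²] × [−2d², 2d²] ⊆ ℝ². Let q : ℝ² → ℝ be a bounded measurable function, and suppose the two-dimensional Lebesgue measure of {p ∈ K : q(p) ≥ λ} is at least 1/(4d⁴). Then ∫_{{p ∈ K : q(p) < λ − (8/ε)·ln(2d/β)}} exp(ε·q(p)) dp ≤ β · ∫_K exp(ε·q(p)) dp. Equivalently, the continuous exponential mechanism on K with density proportional to exp(ε·q) outputs a point of quality below λ − (8/ε)·ln(2d/β) with probability at most β. -/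

import Mathlib

open MeasureTheory

/-- The parameter space `K = [−2d², 6d²] × [−2d², 2d²]` of bounded-coefficient
halfplanes over the grid `{0,…,d}²`. -/
def Kbox (d : ℕ) : Set (ℝ × ℝ) :=
  Set.Icc (-(2 * (d : ℝ) ^ 2)) (6 * (d : ℝ) ^ 2) ×ˢ
    Set.Icc (-(2 * (d : ℝ) ^ 2)) (2 * (d : ℝ) ^ 2)

/-!
The weight `exp(ε q)` is at most `exp(ε t)` on the bad set `{q < t}`, which has area at most
`vol K`, and at least `exp(ε λ)` on the good set `{q ≥ λ}`, which has area at least `a`; so the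
bad mass is at most `(vol K / a) · exp(-ε (λ - t))` times the total mass. For the box,
`vol K / a ≤ 32 d⁴ · 4 d⁴` and the choice of `t` makes `exp(-ε (λ - t)) = (β / 2d)⁸`.
-/

section ExponentialMechanism

variable {α : Type*} [MeasurableSpace α] {μ : Measure α} {K : Set α} {q : α → ℝ} {ε : ℝ}

theorem setIntegral_exp_mul_lt_le (hK : μ K ≠ ⊤) (hε : 0 ≤ ε) (t : ℝ) :
    ∫ p in {p ∈ K | q p < t}, Real.exp (ε * q p) ∂μ ≤ μ.real K * Real.exp (ε * t) := by
  have hsub : {p ∈ K | q p < t} ⊆ K := fun p hp => hp.1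
  calc ∫ p in {p ∈ K | q p < t}, Real.exp (ε * q p) ∂μ
      ≤ Real.exp (ε * t) * μ.real {p ∈ K | q p < t} := by
        refine (Real.le_norm_self _).trans (norm_setIntegral_le_of_norm_le_const
          ((measure_mono hsub).trans_lt hK.lt_top) fun p hp => ?_)
        rw [Real.norm_of_nonneg (Real.exp_pos _).le]
        exact Real.exp_le_exp.2 (mul_le_mul_of_nonneg_left hp.2.le hε)
    _ ≤ μ.real K * Real.exp (ε * t) := by
        rw [mul_comm]
        gcongr

theorem integrableOn_exp_mul (hKm : MeasurableSet K) (hK : μ K ≠ ⊤) (hq : Measurable q) {C : ℝ}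
    (hC : ∀ p ∈ K, q p ≤ C) (hε : 0 ≤ ε) :
    IntegrableOn (fun p => Real.exp (ε * q p)) K μ := by
  refine Measure.integrableOn_of_bounded hK
    (Real.measurable_exp.comp (hq.const_mul ε)).aestronglyMeasurable (M := Real.exp (ε * C)) ?_
  filter_upwards [ae_restrict_mem hKm] with p hp
  rw [Real.norm_of_nonneg (Real.exp_pos _).le]
  exact Real.exp_le_exp.2 (mul_le_mul_of_nonneg_left (hC p hp) hε)

theorem mul_measureReal_le_setIntegral_exp_mul (hKm : MeasurableSet K) (hK : μ K ≠ ⊤)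
    (hq : Measurable q) {C : ℝ} (hC : ∀ p ∈ K, q p ≤ C) (hε : 0 ≤ ε) (lam : ℝ) :
    Real.exp (ε * lam) * μ.real {p ∈ K | lam ≤ q p} ≤ ∫ p in K, Real.exp (ε * q p) ∂μ := by
  have hint := integrableOn_exp_mul hKm hK hq hC hε
  have hsub : {p ∈ K | lam ≤ q p} ⊆ K := fun p hp => hp.1
  calc Real.exp (ε * lam) * μ.real {p ∈ K | lam ≤ q p}
      ≤ ∫ p in {p ∈ K | lam ≤ q p}, Real.exp (ε * q p) ∂μ :=
        setIntegral_ge_of_const_le_real (hKm.inter (hq measurableSet_Ici))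
          (ne_top_of_le_ne_top hK (measure_mono hsub))
          (fun p hp => Real.exp_le_exp.2 (mul_le_mul_of_nonneg_left hp.2 hε)) (hint.mono_set hsub)
    _ ≤ ∫ p in K, Real.exp (ε * q p) ∂μ :=
        setIntegral_mono_set hint (.of_forall fun p => (Real.exp_pos _).le) hsub.eventuallyLE

theorem setIntegral_exp_mul_lt_le_mul_setIntegral (hKm : MeasurableSet K) (hK : μ K ≠ ⊤)
    (hq : Measurable q) {C : ℝ} (hC : ∀ p ∈ K, q p ≤ C) (hε : 0 ≤ ε) {lam : ℝ}
    (hgood : 0 < μ.real {p ∈ K | lam ≤ q p}) (t : ℝ) :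
    ∫ p in {p ∈ K | q p < t}, Real.exp (ε * q p) ∂μ ≤
      μ.real K / μ.real {p ∈ K | lam ≤ q p} * Real.exp (ε * (t - lam)) *
        ∫ p in K, Real.exp (ε * q p) ∂μ := by
  set m := μ.real {p ∈ K | lam ≤ q p}
  calc ∫ p in {p ∈ K | q p < t}, Real.exp (ε * q p) ∂μ ≤ μ.real K * Real.exp (ε * t) :=
        setIntegral_exp_mul_lt_le hK hε t
    _ = μ.real K / m * Real.exp (ε * (t - lam)) * (Real.exp (ε * lam) * m) := by
        rw [mul_sub, Real.exp_sub]
        field_simp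
    _ ≤ μ.real K / m * Real.exp (ε * (t - lam)) * ∫ p in K, Real.exp (ε * q p) ∂μ := by
        gcongr
        exact mul_measureReal_le_setIntegral_exp_mul hKm hK hq hC hε lam

end ExponentialMechanism

theorem measurableSet_Kbox (d : ℕ) : MeasurableSet (Kbox d) :=
  measurableSet_Icc.prod measurableSet_Icc

theorem volume_Kbox (d : ℕ) : volume (Kbox d) = ENNReal.ofReal (32 * (d : ℝ) ^ 4) := by
  rw [Kbox, Measure.volume_eq_prod, Measure.prod_prod, Real.volume_Icc, Real.volume_Icc,
    ← ENNReal.ofReal_mul (by linarith [sq_nonneg (d : ℝ)])]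
  ring_nf

theorem volume_real_Kbox (d : ℕ) : volume.real (Kbox d) = 32 * (d : ℝ) ^ 4 := by
  rw [measureReal_def, volume_Kbox, ENNReal.toReal_ofReal (by positivity)]

theorem exp_mul_sub_div_mul_log_sub_self (lam x : ℝ) {ε : ℝ} (hε : ε ≠ 0) (hx : 0 < x)
    (k : ℕ) :
    Real.exp (ε * (lam - k / ε * Real.log x - lam)) = (x ^ k)⁻¹ := by
  rw [← Real.exp_log (pow_pos hx k), ← Real.exp_neg, Real.log_pow]
  congr 1
  field_simp
  ring

/-- Utility of the continuous exponential mechanism on `K`: if the set of points of `K`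
with quality at least `λ` has area at least `1/(4d⁴)`, then the mechanism (with density
proportional to `exp(ε·q)`) outputs a point of quality below `λ − (8/ε)·ln(2d/β)` with
probability at most `β`. -/
theorem stmt12 (d : ℕ) (hd : 1 ≤ d) (ε β lam : ℝ) (hε : 0 < ε)
    (hβ : β ∈ Set.Ioo (0 : ℝ) 1)
    (q : ℝ × ℝ → ℝ) (hq : Measurable q) (hqbd : ∃ C, ∀ p, |q p| ≤ C)
    (harea : ENNReal.ofReal (1 / (4 * (d : ℝ) ^ 4)) ≤
      volume {p ∈ Kbox d | lam ≤ q p}) :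
    ∫ p in {p ∈ Kbox d | q p < lam - 8 / ε * Real.log (2 * d / β)}, Real.exp (ε * q p)
      ≤ β * ∫ p in Kbox d, Real.exp (ε * q p) := by
  obtain ⟨C, hC⟩ := hqbd
  obtain ⟨hβ0, hβ1⟩ := hβ
  have hd0 : (0 : ℝ) < d := by exact_mod_cast hd
  have hKfin : volume (Kbox d) ≠ ⊤ := by rw [volume_Kbox]; exact ENNReal.ofReal_ne_top
  have hgood : 1 / (4 * (d : ℝ) ^ 4) ≤ volume.real {p ∈ Kbox d | lam ≤ q p} :=
    (ENNReal.ofReal_le_iff_le_toReal (ne_top_of_le_ne_top hKfin (measure_mono fun p hp => hp.1))).1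
      harea
  have hgood0 : 0 < volume.real {p ∈ Kbox d | lam ≤ q p} := lt_of_lt_of_le (by positivity) hgood
  have hfactor : volume.real (Kbox d) / volume.real {p ∈ Kbox d | lam ≤ q p} *
      Real.exp (ε * (lam - 8 / ε * Real.log (2 * d / β) - lam)) ≤ β := by
    have hexp := exp_mul_sub_div_mul_log_sub_self lam (2 * d / β) hε.ne' (by positivity) 8
    rw [Nat.cast_ofNat] at hexp
    rw [volume_real_Kbox, hexp]
    calc 32 * (d : ℝ) ^ 4 / volume.real {p ∈ Kbox d | lam ≤ q p} * ((2 * d / β) ^ 8)⁻¹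
        ≤ 32 * (d : ℝ) ^ 4 / (1 / (4 * (d : ℝ) ^ 4)) * ((2 * d / β) ^ 8)⁻¹ := by gcongr
      _ = β ^ 8 / 2 := by field_simp; ring
      _ ≤ β := by nlinarith [pow_le_of_le_one hβ0.le hβ1.le (show 8 ≠ 0 by norm_num)]
  calc _ ≤ _ := setIntegral_exp_mul_lt_le_mul_setIntegral (measurableSet_Kbox d) hKfin hq
        (C := C) (fun p _ => (abs_le.1 (hC p)).2) hε.le hgood0 _
    _ ≤ β * ∫ p in Kbox d, Real.exp (ε * q p) := by
        gcongr
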